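/- arXiv:2006.11960 — 7 statements merged into one kernel-verified Lean document; each statement's English description precedes it below -/
import Mathlib

section
/- Let f : ℝ → ℝ be twice differentiable with lim_{x→∞} f(x) = L for some real L. If f'(b) ≤ 0 for some b ∈ (a, ∞), then there exists c ∈ (a, ∞) with f''(c) ≥ 0. -/
/-! If `f'' < 0` on `(a, ∞)`, then `f'` is strictly decreasing there, so `f' ≤ f'(b + 1) < f'(b) ≤ 0`
on `[b + 1, ∞)`. By the mean value theorem `f` then lies below a line of negative slope on that ray,
so `f → -∞`, contradicting `f → L`. -/

open Real Filter Set

theorem tendsto_atBot_of_hasDerivAt_le_neg {f f' : ℝ → ℝ} {x₀ m : ℝ}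
    (hf : ∀ x ≥ x₀, HasDerivAt f (f' x) x) (hm : m < 0) (hf'_le : ∀ x ≥ x₀, f' x ≤ m) :
    Tendsto f atTop atBot := by
  have hline : ∀ x ≥ x₀, f x ≤ f x₀ + m * (x - x₀) := by
    intro x hx
    have hmvt := (convex_Ici x₀).image_sub_le_mul_sub_of_deriv_le
      (fun y hy => (hf y hy).continuousAt.continuousWithinAt)
      (fun y hy => (hf y (interior_subset hy)).differentiableAt.differentiableWithinAt)
      (fun y hy => (hf y (interior_subset hy)).deriv ▸ hf'_le y (interior_subset hy))
      x₀ self_mem_Ici x hx hx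
    linarith
  refine tendsto_atBot_mono' atTop (eventually_atTop.mpr ⟨x₀, hline⟩) ?_
  exact tendsto_atBot_add_const_left _ _
    ((tendsto_atTop_add_const_right _ _ tendsto_id).const_mul_atTop_of_neg hm)

theorem stmt_1 (f f' f'' : ℝ → ℝ) (a b L : ℝ)
    (hf' : ∀ x, HasDerivAt f (f' x) x)
    (hf'' : ∀ x, HasDerivAt f' (f'' x) x)
    (hlim : Tendsto f atTop (nhds L))
    (hb : b ∈ Set.Ioi a) (hfb : f' b ≤ 0) :
    ∃ c ∈ Set.Ioi a, 0 ≤ f'' c := by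
  by_contra! hneg
  have hanti : StrictAntiOn f' (Ioi a) :=
    strictAntiOn_of_hasDerivWithinAt_neg (convex_Ioi a)
      (fun x _ => (hf'' x).continuousAt.continuousWithinAt)
      (fun x _ => (hf'' x).hasDerivWithinAt) (by simpa only [interior_Ioi] using hneg)
  have hb₁ : b + 1 ∈ Ioi a := mem_Ioi.mpr (by linarith [mem_Ioi.mp hb])
  have hslope : f' (b + 1) < 0 := (hanti hb hb₁ (by linarith)).trans_le hfb
  have hf'_le : ∀ x ≥ b + 1, f' x ≤ f' (b + 1) := fun x hx =>
    hanti.antitoneOn hb₁ (mem_Ioi.mpr (by linarith [mem_Ioi.mp hb₁])) hx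
  exact not_tendsto_nhds_of_tendsto_atBot
    (tendsto_atBot_of_hasDerivAt_le_neg (fun x _ => hf' x) hslope hf'_le) L hlim
end

section
/- For every integer n ≥ 6 and every real x with 3 ≤ x ≤ n/2, we have n · sin(πx/n)/sin(π/n) ≥ x(n−x) + 1. -/
open Real

/-- Combine `sin t ≥ t - t³/6` at `t = πx/n` in the numerator with `sin (π/n) ≤ π/n` in the
denominator. -/
lemma mul_sub_pi_sq_mul_pow_three_div_le_mul_sin_div_sin {n x : ℝ} (hn : 1 < n) (hx0 : 0 ≤ x)
    (hxn : x ≤ n) :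
    n * x - π ^ 2 * x ^ 3 / (6 * n) ≤ n * sin (π * x / n) / sin (π / n) := by
  have hn0 : 0 < n := by linarith
  have hθ0 : 0 < π / n := by positivity
  have hθπ : π / n < π := div_lt_self pi_pos hn
  have ha0 : 0 ≤ π * x / n := by positivity
  have haπ : π * x / n ≤ π := by
    rw [div_le_iff₀ hn0]
    nlinarith [pi_pos]
  have hsin_a : 0 ≤ sin (π * x / n) := sin_nonneg_of_nonneg_of_le_pi ha0 haπ
  calc n * x - π ^ 2 * x ^ 3 / (6 * n)
      = n * (π * x / n - (π * x / n) ^ 3 / 6) / (π / n) := by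
        field_simp
    _ ≤ n * sin (π * x / n) / (π / n) := by
        gcongr
        exact sin_ge_sub_cube ha0
    _ ≤ n * sin (π * x / n) / sin (π / n) := by
        gcongr
        exacts [sin_pos_of_pos_of_lt_pi hθ0 hθπ, sin_le hθ0.le]

lemma pi_sq_mul_pow_three_div_le_sq_sub_one {n x : ℝ} (hx : 3 ≤ x) (hxn : 2 * x ≤ n) :
    π ^ 2 * x ^ 3 / (6 * n) ≤ x ^ 2 - 1 := by
  have hπ : π ^ 2 < 10 := by nlinarith [pi_lt_d2, pi_pos]
  rw [div_le_iff₀ (by linarith)]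
  have hx_sq : 6 ≤ x ^ 2 := by nlinarith
  nlinarith [mul_le_mul_of_nonneg_left hxn (by positivity : 0 ≤ x ^ 2),
    mul_le_mul_of_nonneg_right hπ.le (by positivity : 0 ≤ x ^ 3),
    mul_le_mul_of_nonneg_left hx_sq (by linarith : 0 ≤ n)]

theorem stmt_3 (n : ℕ) (hn : 6 ≤ n) (x : ℝ) (hx3 : 3 ≤ x) (hxn : x ≤ n / 2) :
    (n : ℝ) * Real.sin (π * x / n) / Real.sin (π / n) ≥ x * (n - x) + 1 := by
  have hn6 : (6 : ℝ) ≤ n := by exact_mod_cast hn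
  calc x * (n - x) + 1 ≤ n * x - π ^ 2 * x ^ 3 / (6 * n) := by
        linarith [pi_sq_mul_pow_three_div_le_sq_sub_one (n := n) hx3 (by linarith)]
    _ ≤ n * sin (π * x / n) / sin (π / n) :=
        mul_sub_pi_sq_mul_pow_three_div_le_mul_sin_div_sin (by linarith) (by linarith)
          (by linarith)
end

section
/- For every integer n ≥ 4 and every integer k with 2 ≤ k ≤ ⌊n/2⌋, we have n · sin(πk/n)/sin(π/n) > k(n−k) + 1. -/
/-!
Writing `x = π / n`, the Dirichlet-kernel identity
`sin (k x) / sin x = ∑_{j < k} cos ((2 j + 1 - k) x)` together with `cos t ≥ 1 - t² / 2` gives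
`n sin (k x) / sin x ≥ n k - π² (k³ - k) / (6 n)`. The right-hand side exceeds `k (n - k) + 1`
exactly when `(k² - 1) (1 - π² k / (6 n)) > 0`, which holds since `k ≥ 2` and `π² < 12 ≤ 6 n / k`.
-/

open Real Finset

lemma sum_range_sq_two_mul_add_one_sub (k : ℕ) (m : ℝ) :
    ∑ j ∈ range k, (2 * (j : ℝ) + 1 - m) ^ 2 = (4 * (k : ℝ) ^ 3 - k) / 3 - 2 * m * k ^ 2 + k * m ^ 2 := by
  induction k with
  | zero => simp
  | succ k ih => rw [sum_range_succ, ih]; push_cast; ring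

lemma two_mul_sin_nat_mul_eq_sum (k : ℕ) (x : ℝ) :
    2 * sin (k * x) = ∑ j ∈ range k, 2 * sin x * cos ((2 * (j : ℝ) + 1 - k) * x) := by
  have telescope := sum_range_sub (fun j : ℕ => sin ((2 * (j : ℝ) - k) * x)) k
  simp only [Nat.cast_zero, mul_zero, zero_sub, neg_mul, sin_neg, sub_neg_eq_add,
    show (2 * (k : ℝ) - k) * x = k * x by ring] at telescope
  rw [two_mul, ← telescope]
  refine sum_congr rfl fun j _ => ?_
  rw [sin_sub_sin]
  push_cast
  ring_nf

lemma sin_mul_le_sin_nat_mul {x : ℝ} (hx : 0 ≤ sin x) (k : ℕ) :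
    sin x * (k - ((k : ℝ) ^ 3 - k) * x ^ 2 / 6) ≤ sin (k * x) := by
  have hcos : ∀ j ∈ range k, 2 * sin x * (1 - ((2 * (j : ℝ) + 1 - k) * x) ^ 2 / 2)
      ≤ 2 * sin x * cos ((2 * (j : ℝ) + 1 - k) * x) :=
    fun j _ => mul_le_mul_of_nonneg_left one_sub_sq_div_two_le_cos (by positivity)
  have hsum : ∑ j ∈ range k, (1 - ((2 * (j : ℝ) + 1 - k) * x) ^ 2 / 2)
      = k - ((k : ℝ) ^ 3 - k) * x ^ 2 / 6 := by
    simp only [mul_pow, sum_sub_distrib, sum_const, card_range, nsmul_eq_mul, mul_one,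
      ← sum_div, ← sum_mul, sum_range_sq_two_mul_add_one_sub]
    ring
  have := sum_le_sum hcos
  rw [← two_mul_sin_nat_mul_eq_sum, ← mul_sum, hsum] at this
  linarith

lemma mul_sub_add_one_lt_of_two_mul_le {n k : ℝ} (hk : 2 ≤ k) (hn : 2 * k ≤ n) :
    k * (n - k) + 1 < n * (k - (k ^ 3 - k) * (π / n) ^ 2 / 6) := by
  have hn0 : 0 < n := by linarith
  have hpi : π ^ 2 * k < 6 * n := by
    have : π ^ 2 < 12 := by nlinarith [pi_lt_d2, pi_pos]
    nlinarith
  have hk2 : 0 < k ^ 2 - 1 := by nlinarith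
  have key : n * (k - (k ^ 3 - k) * (π / n) ^ 2 / 6) - (k * (n - k) + 1)
      = (k ^ 2 - 1) * (6 * n - π ^ 2 * k) / (6 * n) := by
    field_simp
    ring
  have : 0 < (k ^ 2 - 1) * (6 * n - π ^ 2 * k) / (6 * n) :=
    div_pos (mul_pos hk2 (by linarith)) (by positivity)
  linarith

theorem stmt_4_general (n k : ℕ) (hk2 : 2 ≤ k) (hk : k ≤ n / 2) :
    (n : ℝ) * Real.sin (π * k / n) / Real.sin (π / n) > k * (n - k) + 1 := by
  have hkn : (2 : ℝ) * k ≤ n := by exact_mod_cast (show 2 * k ≤ n by omega)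
  have hk2' : (2 : ℝ) ≤ k := by exact_mod_cast hk2
  have hn1 : (1 : ℝ) < n := by linarith
  have hsin : 0 < sin (π / n) :=
    sin_pos_of_pos_of_lt_pi (div_pos pi_pos (by linarith)) (div_lt_self pi_pos hn1)
  rw [gt_iff_lt, lt_div_iff₀ hsin, show π * k / n = k * (π / n) by ring]
  calc (k * (n - k) + 1) * sin (π / n)
      < n * (k - ((k : ℝ) ^ 3 - k) * (π / n) ^ 2 / 6) * sin (π / n) :=
        mul_lt_mul_of_pos_right (mul_sub_add_one_lt_of_two_mul_le hk2' hkn) hsin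
    _ = n * (sin (π / n) * (k - ((k : ℝ) ^ 3 - k) * (π / n) ^ 2 / 6)) := by ring
    _ ≤ n * sin (k * (π / n)) :=
        mul_le_mul_of_nonneg_left (sin_mul_le_sin_nat_mul hsin.le k) (by positivity)

theorem stmt_4 (n k : ℕ) (hn : 4 ≤ n) (hk2 : 2 ≤ k) (hk : k ≤ n / 2) :
    (n : ℝ) * Real.sin (π * k / n) / Real.sin (π / n) > k * (n - k) + 1 :=
  stmt_4_general n k hk2 hk
end

section
/- For every integer k ≥ 2, define F_k(x) = δ_k(x) − k(x−k) − 1, where δ_k(x) = 2x·∑_{j=1}^{k/2} cos((k−(2j−1))π/x) if k is even, and δ_k(x) = x + 2x·∑_{j=1}^{(k−1)/2} cos((k−(2j−1))π/x) if k is odd. Then the second derivative of F_k is negative on (2(k−1), ∞), i.e., F_k is strictly concave on (2(k−1), ∞). -/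
/-!
Up to an affine function of `x`, `F_k(x)` is `2x ∑ⱼ cos(cⱼ/x)` with `cⱼ = (k - (2j - 1))π`.
Since `(x cos(c/x))'' = -c² cos(c/x) / x³`, the second derivative is
`-2 ∑ⱼ cⱼ² cos(cⱼ/x) / x³`, and for `x > 2(k - 1)` every phase `cⱼ/x` lies in `(0, π/2)`,
where the cosine is positive.
-/

open Real Finset Filter Topology

lemma deriv_deriv_eq_of_hasDerivAt {f f' : ℝ → ℝ} {f'' x : ℝ}
    (hf : ∀ᶠ y in 𝓝 x, HasDerivAt f (f' y) y) (hf' : HasDerivAt f' f'' x) :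
    deriv (deriv f) x = f'' := by
  have hderiv : deriv f =ᶠ[𝓝 x] f' := hf.mono fun _ hy => hy.deriv
  rw [hderiv.deriv_eq, hf'.deriv]

lemma hasDerivAt_const_div (c : ℝ) {x : ℝ} (hx : x ≠ 0) :
    HasDerivAt (fun y => c / y) (-(c / x ^ 2)) x := by
  simpa [div_eq_mul_inv] using (hasDerivAt_inv hx).const_mul c

lemma hasDerivAt_mul_cos_div (c : ℝ) {x : ℝ} (hx : x ≠ 0) :
    HasDerivAt (fun y => y * cos (c / y)) (cos (c / x) + c / x * sin (c / x)) x :=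
  ((hasDerivAt_id' x).fun_mul (hasDerivAt_const_div c hx).cos).congr_deriv (by field_simp)

lemma hasDerivAt_cos_div_add_div_mul_sin_div (c : ℝ) {x : ℝ} (hx : x ≠ 0) :
    HasDerivAt (fun y => cos (c / y) + c / y * sin (c / y)) (-(c ^ 2 * cos (c / x) / x ^ 3)) x :=
  have hdiv := hasDerivAt_const_div c hx
  (hdiv.cos.fun_add (hdiv.fun_mul hdiv.sin)).congr_deriv (by field_simp; ring)

section

variable {ι : Type*} (s : Finset ι) (c : ι → ℝ) (r b d : ℝ)

lemma deriv_deriv_mul_sum_cos_div_add_affine {x : ℝ} (hx : x ≠ 0) :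
    deriv (deriv fun y => r * y * ∑ j ∈ s, cos (c j / y) + (b * y + d)) x =
      -(r * ∑ j ∈ s, c j ^ 2 * cos (c j / x)) / x ^ 3 := by
  have hf : ∀ y ≠ 0, HasDerivAt (fun y => r * y * ∑ j ∈ s, cos (c j / y) + (b * y + d))
      (r * ∑ j ∈ s, (cos (c j / y) + c j / y * sin (c j / y)) + b) y := by
    intro y hy
    have hsum := (HasDerivAt.fun_sum fun j (_ : j ∈ s) =>
      hasDerivAt_mul_cos_div (c j) hy).const_mul r
    have hlin := ((hasDerivAt_id' y).const_mul b).add_const d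
    simp only [mul_one] at hlin
    simpa only [mul_assoc, mul_sum] using hsum.fun_add hlin
  refine deriv_deriv_eq_of_hasDerivAt ((isOpen_ne.eventually_mem hx).mono hf) ?_
  refine (((HasDerivAt.fun_sum fun j (_ : j ∈ s) =>
    hasDerivAt_cos_div_add_div_mul_sin_div (c j) hx).const_mul r).add_const b).congr_deriv ?_
  simp only [sum_neg_distrib, ← sum_div]
  ring

lemma deriv_deriv_mul_sum_cos_div_add_affine_neg (hr : 0 < r) (hs : s.Nonempty) {x : ℝ}
    (hx : 0 < x) (hc : ∀ j ∈ s, c j ≠ 0 ∧ c j / x ∈ Set.Ioo (-(π / 2)) (π / 2)) :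
    deriv (deriv fun y => r * y * ∑ j ∈ s, cos (c j / y) + (b * y + d)) x < 0 := by
  rw [deriv_deriv_mul_sum_cos_div_add_affine s c r b d hx.ne']
  have hsum : 0 < ∑ j ∈ s, c j ^ 2 * cos (c j / x) :=
    sum_pos (fun j hj =>
      mul_pos (sq_pos_of_ne_zero (hc j hj).1) (cos_pos_of_mem_Ioo (hc j hj).2)) hs
  exact div_neg_of_neg_of_pos (neg_neg_of_pos (mul_pos hr hsum)) (pow_pos hx 3)

end

theorem stmt_8 (k : ℕ) (hk : 2 ≤ k) (F : ℝ → ℝ)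
    (hF : ∀ x : ℝ, F x =
      (if Even k then
        2 * x * ∑ j ∈ Finset.Icc 1 (k / 2), Real.cos (((k : ℝ) - (2 * (j : ℝ) - 1)) * π / x)
      else
        x + 2 * x * ∑ j ∈ Finset.Icc 1 ((k - 1) / 2),
          Real.cos (((k : ℝ) - (2 * (j : ℝ) - 1)) * π / x))
      - k * (x - k) - 1) :
    ∀ x ∈ Set.Ioi (2 * ((k : ℝ) - 1)), deriv (deriv F) x < 0 := by
  intro x hx
  obtain ⟨b, rfl⟩ : ∃ b : ℝ, F = fun y => 2 * y * ∑ j ∈ Icc 1 (k / 2),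
      cos (((k : ℝ) - (2 * (j : ℝ) - 1)) * π / y) + (b * y + ((k : ℝ) * k - 1)) := by
    by_cases hke : Even k
    · exact ⟨-k, funext fun y => by rw [hF, if_pos hke]; ring⟩
    · refine ⟨1 - k, funext fun y => ?_⟩
      have hodd := Nat.odd_iff.mp (Nat.not_even_iff_odd.mp hke)
      rw [hF, if_neg hke, show (k - 1) / 2 = k / 2 by omega]
      ring
  have hx : 2 * ((k : ℝ) - 1) < x := hx
  have hx0 : 0 < x := by linarith [(Nat.ofNat_le_cast.mpr hk : (2 : ℝ) ≤ k)]
  refine deriv_deriv_mul_sum_cos_div_add_affine_neg _ _ 2 b _ two_pos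
    (nonempty_Icc.mpr (by omega)) hx0 fun j hj => ?_
  have hj : (1 : ℝ) ≤ j ∧ 2 * (j : ℝ) ≤ k := by
    obtain ⟨h1, h2⟩ := mem_Icc.mp hj
    exact ⟨by exact_mod_cast h1, by exact_mod_cast (by omega : 2 * j ≤ k)⟩
  have hc : 0 < ((k : ℝ) - (2 * j - 1)) * π := mul_pos (by linarith) pi_pos
  refine ⟨hc.ne', by linarith [div_pos hc hx0, pi_pos], ?_⟩
  rw [div_lt_iff₀ hx0]
  nlinarith [pi_pos]
end

section
/- For every integer n ≥ 3, 2n·cos(π/n) − 2(n−2) − 1 > 0 whenever n > 3, and equals 0 when n = 3. -/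
/-!
Since `cos t > 1 - t²/2` for `t ≠ 0`, we get `2n cos(π/n) > 2n - π²/n`, so the quantity exceeds
`3 - π²/n`, which is positive as soon as `π² < 3n`; for `n ≥ 4` this holds because `π² < 10`.
At `n = 3` it is `6 cos(π/3) - 3 = 0`.
-/

open Real

lemma two_mul_sub_sq_div_lt_two_mul_mul_cos {a x : ℝ} (ha : a ≠ 0) (hx : 0 < x) :
    2 * x - a ^ 2 / x < 2 * x * cos (a / x) := by
  have hcos : 1 - (a / x) ^ 2 / 2 < cos (a / x) :=
    one_sub_sq_div_two_lt_cos (div_ne_zero ha hx.ne')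
  calc 2 * x - a ^ 2 / x = 2 * x * (1 - (a / x) ^ 2 / 2) := by field_simp
    _ < 2 * x * cos (a / x) := by gcongr

lemma pi_sq_lt_ten : π ^ 2 < 10 := by
  nlinarith [pi_lt_d2, pi_pos]

lemma two_mul_sub_three_lt_two_mul_mul_cos_pi_div {x : ℝ} (hx : 4 ≤ x) :
    2 * x - 3 < 2 * x * cos (π / x) := by
  have hx0 : 0 < x := by linarith
  have hpi : π ^ 2 / x < 3 := by
    rw [div_lt_iff₀ hx0]
    linarith [pi_sq_lt_ten]
  linarith [two_mul_sub_sq_div_lt_two_mul_mul_cos pi_ne_zero hx0]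

theorem stmt_15_general (n : ℤ) :
    (3 < n → 2 * (n : ℝ) * Real.cos (π / n) - 2 * ((n : ℝ) - 2) - 1 > 0)
    ∧ (n = 3 → 2 * (n : ℝ) * Real.cos (π / n) - 2 * ((n : ℝ) - 2) - 1 = 0) := by
  constructor
  · intro h4
    have hn4 : (4 : ℝ) ≤ n := by exact_mod_cast h4
    linarith [two_mul_sub_three_lt_two_mul_mul_cos_pi_div hn4]
  · rintro rfl
    norm_num [cos_pi_div_three]

theorem stmt_15 (n : ℤ) (hn : 3 ≤ n) :
    (3 < n → 2 * (n : ℝ) * Real.cos (π / n) - 2 * ((n : ℝ) - 2) - 1 > 0)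
    ∧ (n = 3 → 2 * (n : ℝ) * Real.cos (π / n) - 2 * ((n : ℝ) - 2) - 1 = 0) :=
  stmt_15_general n
end

section
/- For every integer n ≥ 5, n + 2n·cos(2π/n) > 3(n−3) + 1, while at n = 4 equality holds: n + 2n·cos(2π/n) = 3·1 + 1. -/
open Real

theorem stmt_16 :
    (∀ n : ℤ, 5 ≤ n → (n : ℝ) + 2 * n * Real.cos (2 * π / n) > 3 * ((n : ℝ) - 3) + 1)
    ∧ ((4 : ℝ) + 2 * 4 * Real.cos (2 * π / 4) = 3 * ((4 : ℝ) - 3) + 1) := by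
  constructor
  · intro n h
    have hn : (5 : ℝ) ≤ (n : ℝ) := by exact_mod_cast h
    have hn0 : (0 : ℝ) < (n : ℝ) := by linarith
    have hpi2 : π ^ 2 < 10 := by nlinarith [pi_lt_d2, pi_pos]
    have hc : 1 - (2 * π / (n : ℝ)) ^ 2 / 2 ≤ Real.cos (2 * π / n) :=
      Real.one_sub_sq_div_two_le_cos
    have h1 : ((n : ℝ)) ^ 2 * (1 - (2 * π / n) ^ 2 / 2) = (n : ℝ) ^ 2 - 2 * π ^ 2 := by
      field_simp
    have hcc : (n : ℝ) ^ 2 - 2 * π ^ 2 ≤ (n : ℝ) ^ 2 * Real.cos (2 * π / n) := by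
      rw [← h1]
      exact mul_le_mul_of_nonneg_left hc (sq_nonneg _)
    nlinarith [hcc, hpi2, hn, hn0, mul_pos hn0 hn0]
  · rw [show (2 * π / 4 : ℝ) = π / 2 by ring, Real.cos_pi_div_two]
    norm_num
end

section
/- For every integer n ≥ 2 and every integer k with 1 ≤ k ≤ n−1, we have n · sin(πk/n)/sin(π/n) ≥ k(n−k) + 1, with equality if and only if k = 1 or k = n−1. -/
/-!
Both sides are invariant under `k ↦ n - k`, so we may assume `2k ≤ n`. For `k = 1` both sides
equal `n`. For `k ≥ 2`, bound `sin (π / n) ≤ π / n` on the left and `sin t ≥ t - t³ / 6` at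
`t = π k / n` on the right; the strict inequality then reduces to the polynomial inequality
`π² k³ < 6 n (k² - 1)`, which holds once `n ≥ 5`. The remaining case `n = 4, k = 2` reads
`5 sin (π / 4) < 4`.
-/

open Real

lemma sin_pi_mul_sub_div (x y : ℝ) (hy : y ≠ 0) :
    sin (π * (y - x) / y) = sin (π * x / y) := by
  rw [show π * (y - x) / y = π - π * x / y by field_simp, sin_pi_sub]

lemma pi_sq_mul_cube_lt (m n : ℝ) (hm : 2 ≤ m) (hmn : 2 * m ≤ n) (hn : 5 ≤ n) :
    π ^ 2 * m ^ 3 < 6 * n * (m ^ 2 - 1) := by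
  have hpi_sq : π ^ 2 < 9.9225 := by nlinarith [pi_pos, pi_lt_d2]
  have hm3 : π ^ 2 * m ^ 3 < 9.9225 * m ^ 3 := by gcongr
  rcases le_or_gt m (5 / 2) with hm' | hm'
  · have hn_ge : 30 * (m ^ 2 - 1) ≤ 6 * n * (m ^ 2 - 1) := by
      nlinarith [mul_le_mul_of_nonneg_right hn (by nlinarith : (0 : ℝ) ≤ m ^ 2 - 1)]
    -- `30 (m² - 1) - 9.9225 m³` is concave on `[2, 5/2]` and positive at both endpoints.
    have hconcave : 0 ≤ (m - 2) * (5 / 2 - m) * m :=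
      mul_nonneg (mul_nonneg (sub_nonneg.2 hm) (sub_nonneg.2 hm')) (by linarith)
    nlinarith
  · have hm_sq : 6.25 < m ^ 2 := by nlinarith
    have hn_ge : 12 * m * (m ^ 2 - 1) ≤ 6 * n * (m ^ 2 - 1) := by nlinarith
    nlinarith

lemma mul_sin_pi_div_lt_of_pi_sq_mul_cube_lt {m n : ℝ} (hm : 0 < m) (hmn : m ≤ n)
    (h : π ^ 2 * m ^ 3 < 6 * n * (m ^ 2 - 1)) :
    (m * (n - m) + 1) * sin (π / n) < n * sin (π * m / n) := by
  have hn : 0 < n := hm.trans_le hmn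
  have hcoef : 0 ≤ m * (n - m) + 1 := by nlinarith
  have hgap : n * (π * m / n - (π * m / n) ^ 3 / 6) - (m * (n - m) + 1) * (π / n)
      = π / (6 * n ^ 2) * (6 * n * (m ^ 2 - 1) - π ^ 2 * m ^ 3) := by
    field_simp
    ring
  have hgap_pos : 0 < π / (6 * n ^ 2) * (6 * n * (m ^ 2 - 1) - π ^ 2 * m ^ 3) :=
    mul_pos (by positivity) (by linarith)
  calc (m * (n - m) + 1) * sin (π / n)
      ≤ (m * (n - m) + 1) * (π / n) := by gcongr; exact sin_le (by positivity)
    _ < n * (π * m / n - (π * m / n) ^ 3 / 6) := by linarith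
    _ ≤ n * sin (π * m / n) := by gcongr; exact sin_ge_sub_cube (by positivity)

lemma mul_sin_pi_div_lt_of_two_le {m n : ℤ} (hm : 2 ≤ m) (hmn : 2 * m ≤ n) :
    ((m : ℝ) * (n - m) + 1) * sin (π / n) < n * sin (π * m / n) := by
  rcases (show n = 4 ∨ 5 ≤ n by omega) with rfl | hn
  · obtain rfl : m = 2 := by omega
    norm_num [show π * 2 / 4 = π / 2 by ring]
    nlinarith [sq_sqrt (show (0 : ℝ) ≤ 2 by norm_num), sqrt_nonneg 2]
  · have hm' : (2 : ℝ) ≤ m := by exact_mod_cast hm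
    have hmn' : 2 * (m : ℝ) ≤ n := by exact_mod_cast hmn
    have hn' : (5 : ℝ) ≤ n := by exact_mod_cast hn
    exact mul_sin_pi_div_lt_of_pi_sq_mul_cube_lt (by linarith) (by linarith)
      (pi_sq_mul_cube_lt m n hm' hmn' hn')

theorem stmt_17 (n k : ℤ) (hn : 2 ≤ n) (hk1 : 1 ≤ k) (hk2 : k ≤ n - 1) :
    (n : ℝ) * Real.sin (π * k / n) / Real.sin (π / n) ≥ k * ((n : ℝ) - k) + 1
    ∧ ((n : ℝ) * Real.sin (π * k / n) / Real.sin (π / n) = k * ((n : ℝ) - k) + 1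
        ↔ k = 1 ∨ k = n - 1) := by
  wlog hkn : 2 * k ≤ n generalizing k
  · have hn0 : (n : ℝ) ≠ 0 := by exact_mod_cast (show n ≠ 0 by omega)
    have := this (n - k) (by omega) (by omega) (by omega)
    push_cast at this
    rw [sin_pi_mul_sub_div _ _ hn0, sub_sub_cancel, mul_comm ((n : ℝ) - k)] at this
    simpa only [show n - k = 1 ∨ n - k = n - 1 ↔ k = n - 1 ∨ k = 1 by omega, or_comm]
      using this
  have hs : 0 < sin (π / n) := by
    have hn' : (2 : ℝ) ≤ n := by exact_mod_cast hn
    exact sin_pos_of_pos_of_lt_pi (by positivity) (div_lt_self pi_pos (by linarith))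
  rcases hk1.eq_or_lt with rfl | hk
  · have heq : (n : ℝ) * sin (π * (1 : ℤ) / n) / sin (π / n)
        = (1 : ℤ) * ((n : ℝ) - (1 : ℤ)) + 1 := by
      push_cast
      rw [mul_one, mul_div_assoc, div_self hs.ne']
      ring
    exact ⟨heq.ge, iff_of_true heq (Or.inl rfl)⟩
  · have hlt : (k : ℝ) * (n - k) + 1 < n * sin (π * k / n) / sin (π / n) :=
      (lt_div_iff₀ hs).2 (mul_sin_pi_div_lt_of_two_le hk hkn)
    exact ⟨hlt.le, iff_of_false hlt.ne' (by omega)⟩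
end
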